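/- arXiv:2504.09545 — 2 statements merged into one kernel-verified Lean document; each statement's English description precedes it below -/
import Mathlib

section
/- Let A be an infinite set of positive integers, let e be a nonzero integer and h an integer. Then the function n ↦ d(A, e(n+h)) is unbounded on the positive integers: for every t there exists a positive integer n with d(A, en + eh) ≥ t. -/
/-!
Pick `t` nonzero elements of `A` and let `P` be their product. Choosing `n ≡ -h (mod P)` with
`n + h ≠ 0` makes every one of them divide the nonzero integer `e (n + h)`, and a nonzero integer
has only finitely many divisors, so `d(A, e (n + h)) ≥ t`.
-/

/-- `countDiv A m` is the number of elements `a ∈ A` with `a ∣ m`. -/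
noncomputable def countDiv (A : Set ℕ) (m : ℤ) : ℕ := {a ∈ A | (a : ℤ) ∣ m}.ncard

theorem finite_setOf_mem_and_dvd (A : Set ℕ) {m : ℤ} (hm : m ≠ 0) :
    {a ∈ A | (a : ℤ) ∣ m}.Finite :=
  (m.natAbs.divisors.finite_toSet).subset fun _ ⟨_, ha⟩ =>
    Nat.mem_divisors.2 ⟨Int.natCast_dvd.1 ha, Int.natAbs_ne_zero.2 hm⟩

theorem card_le_countDiv {A : Set ℕ} {S : Finset ℕ} {m : ℤ} (hm : m ≠ 0) (hSA : ↑S ⊆ A)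
    (hSm : ∀ a ∈ S, (a : ℤ) ∣ m) : S.card ≤ countDiv A m := by
  rw [countDiv, ← Set.ncard_coe_finset]
  exact Set.ncard_le_ncard (fun a ha => ⟨hSA ha, hSm a ha⟩) (finite_setOf_mem_and_dvd A hm)

theorem exists_pos_dvd_add_ne_zero {P : ℕ} (hP : P ≠ 0) (h : ℤ) :
    ∃ n : ℕ, 0 < n ∧ (P : ℤ) ∣ n + h ∧ (n : ℤ) + h ≠ 0 := by
  have hP1 : (1 : ℤ) ≤ P := by exact_mod_cast Nat.one_le_iff_ne_zero.2 hP
  have hpos : 0 < (P : ℤ) * (|h| + 1) - h := by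
    nlinarith [le_abs_self h, abs_nonneg h]
  refine ⟨((P : ℤ) * (|h| + 1) - h).toNat, by omega, ?_⟩
  rw [Int.toNat_of_nonneg hpos.le, sub_add_cancel]
  exact ⟨dvd_mul_right _ _, by positivity⟩

theorem caseIII_key_general (A : Set ℕ) (hAinf : A.Infinite)
    (e : ℤ) (he : e ≠ 0) (h : ℤ) :
    ∀ t : ℕ, ∃ n : ℕ, 0 < n ∧ t ≤ countDiv A (e * n + e * h) := by
  intro t
  obtain ⟨S, hSA, rfl⟩ := (hAinf.sdiff (Set.finite_singleton 0)).exists_subset_card_eq t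
  have hP : ∏ a ∈ S, a ≠ 0 := Finset.prod_ne_zero_iff.2 fun a ha => (hSA ha).2
  obtain ⟨n, hn, hdvd, hne⟩ := exists_pos_dvd_add_ne_zero hP h
  refine ⟨n, hn, card_le_countDiv ?_ (fun a ha => (hSA ha).1) fun a ha => ?_⟩ <;> rw [← mul_add]
  · exact mul_ne_zero he hne
  · exact ((Int.natCast_dvd_natCast.2 (Finset.dvd_prod_of_mem _ ha)).trans hdvd).mul_left e

/-- For an infinite set `A` of positive integers, a nonzero integer `e` and an integer `h`,
the function `n ↦ d(A, e(n+h))` is unbounded on the positive integers. -/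
theorem caseIII_key (A : Set ℕ) (hApos : ∀ a ∈ A, 0 < a) (hAinf : A.Infinite)
    (e : ℤ) (he : e ≠ 0) (h : ℤ) :
    ∀ t : ℕ, ∃ n : ℕ, 0 < n ∧ t ≤ countDiv A (e * n + e * h) :=
  caseIII_key_general A hAinf e he h
end

section
/- Let e be a nonzero integer and f an integer with e ∤ f, and let A = {|e|·m : m a positive integer}. Then A is infinite and d(A, en+f) = 0 for every integer n. Consequently, if also b = 0 and c ≠ 0, then |d(A, bn+c) − d(A, en+f)| = d(A, c) ≤ |c| for all n, so it is bounded. -/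
def posMultiples (k : ℕ) : Set ℕ := {x : ℕ | ∃ m : ℕ, 0 < m ∧ x = k * m}

theorem posMultiples_infinite {k : ℕ} (hk : k ≠ 0) : (posMultiples k).Infinite :=
  Set.infinite_of_injective_forall_mem (f := fun m : ℕ => k * (m + 1))
    (fun _ _ h => Nat.succ_injective (Nat.eq_of_mul_eq_mul_left (Nat.pos_of_ne_zero hk) h))
    (fun m => ⟨m + 1, m.succ_pos, rfl⟩)

theorem dvd_of_mem_posMultiples_natAbs {e : ℤ} {a : ℕ} (ha : a ∈ posMultiples e.natAbs) :
    e ∣ (a : ℤ) := by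
  obtain ⟨m, -, rfl⟩ := ha
  exact Int.dvd_natCast.mpr (dvd_mul_right _ _)

theorem countDiv_eq_zero_of_forall_dvd {A : Set ℕ} {d m : ℤ} (hA : ∀ a ∈ A, d ∣ (a : ℤ))
    (hm : ¬ d ∣ m) : countDiv A m = 0 := by
  have hempty : {a ∈ A | (a : ℤ) ∣ m} = ∅ :=
    Set.eq_empty_of_forall_notMem fun a ⟨ha, hdvd⟩ => hm ((hA a ha).trans hdvd)
  rw [countDiv, hempty, Set.ncard_empty]

theorem countDiv_le_natAbs (A : Set ℕ) {c : ℤ} (hc : c ≠ 0) : countDiv A c ≤ c.natAbs := by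
  have hsub : {a ∈ A | (a : ℤ) ∣ c} ⊆ (c.natAbs.divisors : Set ℕ) := fun a ⟨_, hdvd⟩ =>
    Nat.mem_divisors.mpr ⟨Int.natCast_dvd.mp hdvd, Int.natAbs_ne_zero.mpr hc⟩
  calc countDiv A c ≤ (c.natAbs.divisors : Set ℕ).ncard := Set.ncard_le_ncard hsub
    _ = c.natAbs.divisors.card := Set.ncard_coe_finset _
    _ ≤ c.natAbs := Nat.card_divisors_le_self _

/-- Necessity argument in Case 2: if `e ≠ 0`, `e ∤ f`, and `A = {|e|·m : m ≥ 1}`,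
then `A` is infinite, `d(A, en+f) = 0` for every integer `n`, and consequently for
`b = 0` and `c ≠ 0` the quantity `|d(A, bn+c) − d(A, en+f)|` equals `d(A, c) ≤ |c|`. -/
theorem case2_necessity (e f : ℤ) (he : e ≠ 0) (hef : ¬ e ∣ f) :
    ({x : ℕ | ∃ m : ℕ, 0 < m ∧ x = e.natAbs * m} : Set ℕ).Infinite ∧
    (∀ n : ℤ, countDiv {x : ℕ | ∃ m : ℕ, 0 < m ∧ x = e.natAbs * m} (e * n + f) = 0) ∧
    ∀ b c : ℤ, b = 0 → c ≠ 0 → ∀ n : ℤ,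
      |(countDiv {x : ℕ | ∃ m : ℕ, 0 < m ∧ x = e.natAbs * m} (b * n + c) : ℤ) -
        (countDiv {x : ℕ | ∃ m : ℕ, 0 < m ∧ x = e.natAbs * m} (e * n + f) : ℤ)| =
        (countDiv {x : ℕ | ∃ m : ℕ, 0 < m ∧ x = e.natAbs * m} c : ℤ) ∧
      (countDiv {x : ℕ | ∃ m : ℕ, 0 < m ∧ x = e.natAbs * m} c : ℤ) ≤ |c| := by
  rw [show {x : ℕ | ∃ m : ℕ, 0 < m ∧ x = e.natAbs * m} = posMultiples e.natAbs from rfl]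
  have hzero (n : ℤ) : countDiv (posMultiples e.natAbs) (e * n + f) = 0 :=
    countDiv_eq_zero_of_forall_dvd (fun _ => dvd_of_mem_posMultiples_natAbs)
      (by rwa [dvd_add_right (dvd_mul_right e n)])
  refine ⟨posMultiples_infinite (Int.natAbs_ne_zero.mpr he), hzero, ?_⟩
  rintro b c rfl hc n
  rw [zero_mul, zero_add, hzero, Nat.cast_zero, sub_zero, abs_of_nonneg (Nat.cast_nonneg _),
    Int.abs_eq_natAbs]
  exact ⟨rfl, Nat.cast_le.mpr (countDiv_le_natAbs _ hc)⟩
end
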